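/- If 𝒻 and 𝒢 are regular families of finite subsets of ℕ, then the Cantor-Bendixson-type index satisfies ι((𝒻,𝒢)) = ι(𝒢) + ι(𝒻), where (𝒻,𝒢) = {E⌢F : E ∈ 𝒻, F ∈ 𝒢, E < F} ∪ 𝒻 ∪ 𝒢 consists of all concatenations E∪F with max E < min F, E ∈ 𝒻, F ∈ 𝒢. -/

import Mathlib

/-!
As long as `d^ξ 𝒢` still has a nonempty member, deriving `(𝒻, 𝒢)` only derives its
`𝒢`-part: `d^ξ (𝒻, 𝒢) = (𝒻, d^ξ 𝒢)`. At successor steps, `E ∪ F` extends within the sum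
exactly when `F` extends within `𝒢` or `F = ∅`, because every `E ∈ 𝒻` extends by one of the
arbitrarily large singletons that spreading puts in `𝒢`. At limit steps, a set `H` has only
finitely many candidate tails `F ⊆ H`, so the intersection commutes with the sum. At
`ξ = ι(𝒢)` the tail is `⊆ {∅}`, the sum has become `𝒻`, and `ι(𝒻)` further derivatives are
needed.

Compactness makes the indices attained: the derivatives stabilise for cardinality reasons,
and a nonempty family equal to its own derivative contains a strictly increasing chain whose
limit, an infinite set, would lie in the closed family.
-/

open Ordinal

/-- A family of finite subsets of `ℕ` is hereditary if it contains all subsets of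
its members. -/
def IsHereditary (F : Set (Finset ℕ)) : Prop := ∀ E ∈ F, ∀ G ⊆ E, G ∈ F

/-- A family of finite subsets of `ℕ` is spreading if it is closed under replacing
the elements of a member by larger ones, preserving the order. -/
def IsSpreading (F : Set (Finset ℕ)) : Prop :=
  ∀ E ∈ F, ∀ f : ℕ → ℕ, StrictMonoOn f (E : Set ℕ) → (∀ n ∈ E, n ≤ f n) →
    E.image f ∈ F

/-- A family of finite subsets of `ℕ` is regular if it is compact (as a subset of
the Cantor set `2^ℕ`, identifying sets with their indicator functions), spreading
and hereditary. -/
def IsRegularFamily (F : Set (Finset ℕ)) : Prop :=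
  IsCompact ((fun (E : Finset ℕ) (n : ℕ) => decide (n ∈ E)) '' F) ∧
    IsSpreading F ∧ IsHereditary F

/-- The derivative of a family: remove the maximal elements (those admitting no
extension by a larger element within the family). -/
def famDeriv (F : Set (Finset ℕ)) : Set (Finset ℕ) :=
  {E ∈ F | ∃ n : ℕ, (∀ m ∈ E, m < n) ∧ insert n E ∈ F}

/-- Transfinite iterates of the family derivative. -/
noncomputable def famIter (F : Set (Finset ℕ)) (ξ : Ordinal) : Set (Finset ℕ) :=
  Ordinal.limitRecOn ξ F (fun _ ih => famDeriv ih)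
    (fun o _ ih => ⋂ (ζ : Set.Iio o), ih ζ.1 ζ.2)

/-- The Cantor–Bendixson-type index of a family: the least ordinal `ξ` such that
`d^ξ(F) ⊆ {∅}`. -/
noncomputable def famIota (F : Set (Finset ℕ)) : Ordinal :=
  sInf {ξ : Ordinal | famIter F ξ ⊆ {(∅ : Finset ℕ)}}

/-- The "sum" `(𝒻,𝒢)` of two families: all unions `E ∪ F` with `E ∈ 𝒻`, `F ∈ 𝒢`
and `max E < min F`, together with `𝒻` and `𝒢`. -/
def famSum (F G : Set (Finset ℕ)) : Set (Finset ℕ) :=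
  {H : Finset ℕ | ∃ E ∈ F, ∃ E' ∈ G, (∀ m ∈ E, ∀ n ∈ E', m < n) ∧ H = E ∪ E'} ∪ F ∪ G

/-- The "product" `𝒻[𝒢]` of two families: unions of `𝒻`-admissible sequences of
members of `𝒢`, i.e. `E_1 < … < E_s` with each `E_i ∈ 𝒢` and `(min E_i)_i ∈ 𝒻`. -/
def famProd (F G : Set (Finset ℕ)) : Set (Finset ℕ) :=
  {H : Finset ℕ | ∃ l : List {E : Finset ℕ // E.Nonempty},
    l ≠ [] ∧ (∀ E ∈ l, (E : Finset ℕ) ∈ G) ∧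
    l.Chain' (fun E E' => ∀ m ∈ (E : Finset ℕ), ∀ n ∈ (E' : Finset ℕ), m < n) ∧
    (l.map fun E => E.1.min' E.2).toFinset ∈ F ∧
    H = l.foldr (fun E acc => E.1 ∪ acc) ∅}

open Set Filter Topology

universe u

section Iterates

variable (F : Set (Finset ℕ))

@[simp] lemma famIter_zero : famIter F 0 = F := by
  simp [famIter]

@[simp] lemma famIter_succ (ξ : Ordinal) : famIter F (ξ + 1) = famDeriv (famIter F ξ) := by
  rw [famIter, Ordinal.limitRecOn_add_one]
  rfl

lemma famIter_limit {ξ : Ordinal} (h : Order.IsSuccLimit ξ) :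
    famIter F ξ = ⋂ ζ : Iio ξ, famIter F ζ := by
  rw [famIter, Ordinal.limitRecOn_limit _ _ _ _ h]
  rfl

lemma famDeriv_subset : famDeriv F ⊆ F := fun _ h => h.1

lemma famIter_antitone : Antitone (famIter F) := by
  intro ζ ξ
  induction ξ using Ordinal.limitRecOn with
  | zero => intro h; rw [nonpos_iff_eq_zero.1 h]
  | add_one ξ ih =>
    intro h
    rcases h.eq_or_lt with rfl | h
    · rfl
    · rw [famIter_succ]
      exact (famDeriv_subset _).trans (ih (Order.lt_add_one_iff.1 h))
  | limit ξ hlim _ =>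
    intro h
    rcases h.eq_or_lt with rfl | h
    · rfl
    · rw [famIter_limit F hlim]
      exact iInter_subset (fun ζ : Iio ξ => famIter F ζ) ⟨ζ, h⟩

lemma famIter_add (a b : Ordinal) : famIter F (a + b) = famIter (famIter F a) b := by
  induction b using Ordinal.limitRecOn with
  | zero => simp
  | add_one b ih => rw [← add_assoc, famIter_succ, famIter_succ, ih]
  | limit b hlim ih =>
    rw [famIter_limit F (Ordinal.isSuccLimit_add a hlim), famIter_limit _ hlim]
    refine Subset.antisymm (subset_iInter fun ζ => ?_) (subset_iInter fun ζ => ?_)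
    · rw [← ih ζ ζ.2]
      exact iInter_subset_of_subset ⟨a + ζ, (add_lt_add_iff_left a).2 ζ.2⟩ subset_rfl
    · rcases le_or_gt a ζ with h | h
      · have hζ : (ζ : Ordinal) - a < b := (Ordinal.sub_lt_of_le h).2 ζ.2
        rw [← Ordinal.add_sub_cancel_of_le h, ih _ hζ]
        exact iInter_subset (fun w : Iio b => famIter (famIter F a) w) ⟨_, hζ⟩
      · refine iInter_subset_of_subset ⟨0, hlim.bot_lt⟩ ?_
        rw [famIter_zero]
        exact famIter_antitone F h.le

lemma famIter_subset (ξ : Ordinal) : famIter F ξ ⊆ F := by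
  simpa using famIter_antitone F (zero_le : 0 ≤ ξ)

lemma famIter_induction {P : Set (Finset ℕ) → Prop} (h0 : P F)
    (hderiv : ∀ X, P X → P (famDeriv X)) (hinter : ∀ S, (∀ X ∈ S, P X) → P (⋂₀ S))
    (ξ : Ordinal) : P (famIter F ξ) := by
  induction ξ using Ordinal.limitRecOn with
  | zero => rwa [famIter_zero]
  | add_one ξ ih => rw [famIter_succ]; exact hderiv _ ih
  | limit ξ hlim ih =>
    rw [famIter_limit F hlim, ← sInter_range]
    exact hinter _ (forall_mem_range.2 fun ζ => ih ζ ζ.2)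

end Iterates

namespace IsHereditary

variable {F}

lemma famDeriv (hF : IsHereditary F) : IsHereditary (famDeriv F) := by
  rintro E ⟨hE, n, hn, hins⟩ E' hE'
  exact ⟨hF E hE E' hE', n, fun m hm => hn m (hE' hm),
    hF _ hins _ (Finset.insert_subset_insert n hE')⟩

lemma famIter (hF : IsHereditary F) (ξ : Ordinal) : IsHereditary (famIter F ξ) :=
  famIter_induction F hF (fun _ => IsHereditary.famDeriv)
    (fun _ hS E hE E' hE' X hX => hS X hX E (hE X hX) E' hE') ξ

lemma exists_singleton_mem (hF : IsHereditary F) (h : ¬ F ⊆ {∅}) : ∃ m, {m} ∈ F := by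
  obtain ⟨E, hE, hne⟩ := not_subset.1 h
  obtain ⟨m, hm⟩ := Finset.nonempty_iff_ne_empty.2 hne
  exact ⟨m, hF E hE {m} (Finset.singleton_subset_iff.2 hm)⟩

end IsHereditary

namespace IsSpreading

variable {F}

lemma famDeriv (hF : IsSpreading F) : IsSpreading (famDeriv F) := by
  rintro E ⟨hE, n, hn, hins⟩ f hf hle
  obtain ⟨k, hk⟩ := (E.image f).exists_nat_subset_range
  set N := max n k
  have hfN : ∀ m ∈ E, f m < N := fun m hm =>
    (Finset.mem_range.1 (hk (Finset.mem_image_of_mem f hm))).trans_le (le_max_right n k)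
  have hEq : EqOn f (Function.update f n N) E := fun m hm =>
    (Function.update_of_ne (hn m hm).ne _ _).symm
  have himage : (insert n E).image (Function.update f n N) = insert N (E.image f) := by
    rw [Finset.image_insert, Function.update_self, Finset.image_congr hEq.symm]
  refine ⟨hF E hE f hf hle, N, ?_, himage ▸ hF _ hins _ ?_ ?_⟩
  · simpa using hfN
  · rw [Finset.coe_insert, strictMonoOn_insert_iff_of_forall_le fun m hm => (hn m hm).le]
    exact ⟨fun m hm _ => by simpa [← hEq hm] using hfN m hm, hf.congr hEq⟩
  · simp only [Finset.mem_insert, forall_eq_or_imp, Function.update_self]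
    exact ⟨le_max_left n k, fun m hm => (hEq hm).symm ▸ hle m hm⟩

lemma famIter (hF : IsSpreading F) (ξ : Ordinal) : IsSpreading (famIter F ξ) :=
  famIter_induction F hF (fun _ => IsSpreading.famDeriv)
    (fun _ hS E hE f hf hle X hX => hS X hX E (hE X hX) f hf hle) ξ

lemma singleton_mem_of_le (hF : IsSpreading F) {m n : ℕ} (hm : {m} ∈ F) (hmn : m ≤ n) :
    {n} ∈ F := by
  simpa using hF {m} hm (fun _ => n) (by simp) (by simpa using hmn)

end IsSpreading

section Sum

variable {F G : Set (Finset ℕ)}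

lemma famSum_empty_left (G : Set (Finset ℕ)) : famSum ∅ G = G := by
  simp [famSum]

lemma subset_famSum_right (F G : Set (Finset ℕ)) : G ⊆ famSum F G := fun _ => Or.inr

lemma famSum_mono_right {G₁ G₂ : Set (Finset ℕ)} (h : G₁ ⊆ G₂) :
    famSum F G₁ ⊆ famSum F G₂ := by
  rintro H ((⟨E, hE, E', hE', hlt, rfl⟩ | hH) | hH)
  · exact Or.inl (Or.inl ⟨E, hE, E', h hE', hlt, rfl⟩)
  · exact Or.inl (Or.inr hH)
  · exact Or.inr (h hH)

lemma famSum_eq_left (h0F : ∅ ∈ F) (hG : G ⊆ {∅}) : famSum F G = F := by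
  refine Subset.antisymm ?_ fun _ => Or.inl ∘ Or.inr
  rintro H ((⟨E, hE, E', hE', -, rfl⟩ | hH) | hH)
  · rwa [hG hE', Finset.union_empty]
  · exact hH
  · rwa [hG hH]

lemma famDeriv_famSum_subset (hF : IsHereditary F) (hG : IsHereditary G) :
    famDeriv (famSum F G) ⊆ famSum F (famDeriv G) := by
  rintro H ⟨-, n, hn, hins⟩
  have hnH : n ∉ H := fun h => lt_irrefl n (hn n h)
  rcases hins with (⟨E, hE, E', hE', hEE', heq⟩ | hins) | hins
  · have hH : H = (E ∪ E').erase n := by rw [← heq, Finset.erase_insert hnH]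
    by_cases hnE' : n ∈ E'
    · have hnE : n ∉ E := fun h => lt_irrefl n (hEE' n h n hnE')
      refine Or.inl (Or.inl ⟨E, hE, E'.erase n, ⟨hG E' hE' _ (Finset.erase_subset n E'), n,
        fun m hm => hn m ?_, by rwa [Finset.insert_erase hnE']⟩,
        fun a ha b hb => hEE' a ha b (Finset.mem_of_mem_erase hb), ?_⟩)
      · rw [hH]
        exact Finset.erase_subset_erase n Finset.subset_union_right hm
      · rw [hH, Finset.erase_union_distrib, Finset.erase_eq_of_notMem hnE]
    · -- Then `n ∈ E`, and `E < E'` leaves no room in `E'` for the elements of `H`, all `< n`.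
      have hnE : n ∈ E := by
        have h : n ∈ E ∪ E' := heq ▸ Finset.mem_insert_self n H
        simpa [hnE'] using h
      refine Or.inl (Or.inr (hF E hE H fun m hm => ?_))
      have hm' : m ∈ E ∪ E' := heq ▸ Finset.mem_insert_of_mem hm
      exact (Finset.mem_union.1 hm').resolve_right fun h => lt_asymm (hn m hm) (hEE' n hnE m h)
  · exact Or.inl (Or.inr (hF _ hins H (Finset.subset_insert n H)))
  · exact Or.inr ⟨hG _ hins H (Finset.subset_insert n H), n, hn, hins⟩

lemma famSum_famDeriv_subset (hG : IsSpreading G) {m : ℕ} (hm : {m} ∈ G) :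
    famSum F (famDeriv G) ⊆ famDeriv (famSum F G) := by
  have hF : ∀ E ∈ F, E ∈ famDeriv (famSum F G) := by
    intro E hE
    obtain ⟨k, hk⟩ := E.exists_nat_subset_range
    have hkE : ∀ a ∈ E, a < max m k := fun a ha =>
      (Finset.mem_range.1 (hk ha)).trans_le (le_max_right m k)
    refine ⟨Or.inl (Or.inr hE), max m k, hkE, Or.inl (Or.inl ⟨E, hE, {max m k},
      hG.singleton_mem_of_le hm (le_max_left m k), by simpa using hkE, ?_⟩)⟩
    rw [Finset.insert_eq, Finset.union_comm]
  rintro H ((⟨E, hE, E', ⟨hE', n, hn, hins⟩, hEE', rfl⟩ | hH) | ⟨hH, n, hn, hins⟩)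
  · rcases E'.eq_empty_or_nonempty with rfl | ⟨p, hp⟩
    · simpa using hF E hE
    have hEn : ∀ a ∈ E, a < n := fun a ha => (hEE' a ha p hp).trans (hn p hp)
    refine ⟨Or.inl (Or.inl ⟨E, hE, E', hE', hEE', rfl⟩), n, ?_,
      Or.inl (Or.inl ⟨E, hE, insert n E', hins, ?_, (Finset.union_insert n E E').symm⟩)⟩
    · simpa [or_imp, forall_and] using ⟨hEn, hn⟩
    · simpa [forall_and] using ⟨hEn, hEE'⟩
  · exact hF H hH
  · exact ⟨Or.inr hH, n, hn, Or.inr hins⟩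

lemma famDeriv_famSum (hF : IsHereditary F) (hGh : IsHereditary G) (hGs : IsSpreading G)
    {m : ℕ} (hm : {m} ∈ G) : famDeriv (famSum F G) = famSum F (famDeriv G) :=
  (famDeriv_famSum_subset hF hGh).antisymm (famSum_famDeriv_subset hGs hm)

end Sum

lemma Antitone.exists_forall_mem_iInter {ι α : Type*} [Preorder ι] [IsDirectedOrder ι]
    [Nonempty ι] {G : ι → Set α} (hG : Antitone G) (s : Finset α) :
    ∃ i, ∀ x ∈ s, x ∈ G i → x ∈ ⋂ j, G j := by
  have hdir : Directed (· ⊆ ·) fun i => (G i)ᶜ ∪ ⋂ j, G j :=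
    Monotone.directed_le fun i j hij =>
      union_subset_union_left _ (compl_subset_compl.2 (hG hij))
  obtain ⟨i, hi⟩ := hdir.exists_mem_subset_of_finset_subset_biUnion (s := s) fun x _ => by
    by_cases hx : x ∈ ⋂ j, G j
    · exact mem_iUnion.2 ⟨Classical.arbitrary ι, Or.inr hx⟩
    · obtain ⟨j, hj⟩ := mem_iInter.not.1 hx |> not_forall.1
      exact mem_iUnion.2 ⟨j, Or.inl hj⟩
  exact ⟨i, fun x hx hxi => (hi hx).resolve_left (not_not.2 hxi)⟩

-- Only the finitely many `E' ⊆ H` can witness `H ∈ famSum F (G i)`.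
lemma famSum_iInter {ι : Type*} [Preorder ι] [IsDirectedOrder ι] [Nonempty ι]
    (F : Set (Finset ℕ)) {G : ι → Set (Finset ℕ)} (hG : Antitone G) :
    famSum F (⋂ i, G i) = ⋂ i, famSum F (G i) := by
  refine (subset_iInter fun i => famSum_mono_right (iInter_subset G i)).antisymm fun H hH => ?_
  obtain ⟨i, hi⟩ := hG.exists_forall_mem_iInter H.powerset
  rcases mem_iInter.1 hH i with (⟨E, hE, E', hE', hEE', rfl⟩ | hHF) | hHG
  · exact Or.inl (Or.inl ⟨E, hE, E', hi E' (Finset.mem_powerset.2 Finset.subset_union_right) hE',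
      hEE', rfl⟩)
  · exact Or.inl (Or.inr hHF)
  · exact Or.inr (hi H (Finset.mem_powerset_self H) hHG)

section Index

variable {X : Set (Finset ℕ)}

lemma famIota_le {ξ : Ordinal} (h : famIter X ξ ⊆ {∅}) : famIota X ≤ ξ := csInf_le' h

lemma not_famIter_subset_of_lt_famIota {ξ : Ordinal} (h : ξ < famIota X) :
    ¬ famIter X ξ ⊆ {∅} :=
  notMem_of_lt_csInf' h

lemma famIota_empty : famIota (∅ : Set (Finset ℕ)) = 0 :=
  nonpos_iff_eq_zero.1 (famIota_le (by simp))

lemma famIota_eq_add {Y : Set (Finset ℕ)} {a : Ordinal.{u}}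
    (ha : ∀ ζ < a, ¬ famIter X ζ ⊆ {∅}) (hXY : famIter X a = Y)
    (hY : famIter Y (famIota.{u} Y) ⊆ {∅}) : famIota X = a + famIota Y := by
  subst hXY
  have hab : famIter X (a + famIota (famIter X a)) ⊆ {∅} := by rwa [famIter_add]
  refine (famIota_le hab).antisymm (le_csInf ⟨_, hab⟩ fun ξ (hξ : famIter X ξ ⊆ {∅}) => ?_)
  have haξ : a ≤ ξ := not_lt.1 fun h => ha ξ h hξ
  rw [← Ordinal.le_sub_of_le haξ]
  rw [← Ordinal.add_sub_cancel_of_le haξ, famIter_add] at hξ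
  exact famIota_le hξ

end Index

lemma famIter_famSum {F G : Set (Finset ℕ)} (hF : IsHereditary F) (hGh : IsHereditary G)
    (hGs : IsSpreading G) {ξ : Ordinal} (hξ : ξ ≤ famIota G) :
    famIter (famSum F G) ξ = famSum F (famIter G ξ) := by
  induction ξ using Ordinal.limitRecOn with
  | zero => simp
  | add_one ξ ih =>
    have hξG : ξ < famIota G := Order.add_one_le_iff.1 hξ
    obtain ⟨m, hm⟩ := (hGh.famIter ξ).exists_singleton_mem
      (not_famIter_subset_of_lt_famIota hξG)
    rw [famIter_succ, famIter_succ, ih hξG.le,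
      famDeriv_famSum hF (hGh.famIter ξ) (hGs.famIter ξ) hm]
  | limit ξ hlim ih =>
    have : Nonempty (Iio ξ) := ⟨⟨0, hlim.bot_lt⟩⟩
    rw [famIter_limit _ hlim, famIter_limit _ hlim,
      famSum_iInter F (G := fun ζ : Iio ξ => famIter G ζ) fun ζ ζ' h => famIter_antitone G h]
    exact iInter_congr fun ζ => ih ζ ζ.2 (ζ.2.le.trans hξ)

section Compactness

def Finset.boolIndicator (E : Finset ℕ) : ℕ → Bool := fun n => decide (n ∈ E)

lemma Monotone.exists_tendsto_boolIndicator {s : ℕ → Finset ℕ} (hs : Monotone s) :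
    ∃ χ : ℕ → Bool, Tendsto (fun k => Finset.boolIndicator (s k)) atTop (𝓝 χ) ∧
      ∀ k, ∀ n ∈ s k, χ n = true := by
  have h : ∀ n, ∃ b, (∀ᶠ k in atTop, Finset.boolIndicator (s k) n = b) ∧
      ∀ k, n ∈ s k → b = true := by
    intro n
    by_cases hn : ∃ k, n ∈ s k
    · obtain ⟨k, hk⟩ := hn
      exact ⟨true, eventually_atTop.2 ⟨k, fun j hj => decide_eq_true (hs hj hk)⟩,
        fun _ _ => rfl⟩
    · push Not at hn
      exact ⟨false, Eventually.of_forall fun k => decide_eq_false (hn k),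
        fun k hk => absurd hk (hn k)⟩
  choose χ hlim hχ using h
  refine ⟨χ, tendsto_pi_nhds.2 fun n => ?_, fun k n => hχ n k⟩
  rw [nhds_discrete, tendsto_pure]
  exact hlim n

variable {X : Set (Finset ℕ)}

lemma eq_empty_of_subset_famDeriv (hX : IsClosed (Finset.boolIndicator '' X))
    {Z : Set (Finset ℕ)} (hZX : Z ⊆ X) (hZ : Z ⊆ famDeriv Z) : Z = ∅ := by
  by_contra hne
  obtain ⟨E₀, hE₀⟩ := nonempty_iff_ne_empty.2 hne
  have hstep : ∀ E : Z, ∃ E' : Z, E.1 ⊂ E'.1 := fun E => by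
    obtain ⟨-, n, hn, hins⟩ := hZ E.2
    exact ⟨⟨_, hins⟩, Finset.ssubset_insert fun h => lt_irrefl n (hn n h)⟩
  choose next hnext using hstep
  set s : ℕ → Finset ℕ := fun k => (next^[k] ⟨E₀, hE₀⟩).1
  have hs : StrictMono s := strictMono_nat_of_lt_succ fun k => by
    simpa only [s, Function.iterate_succ_apply'] using hnext _
  obtain ⟨χ, hlim, hχ⟩ := hs.monotone.exists_tendsto_boolIndicator
  obtain ⟨E, -, rfl⟩ := hX.mem_of_tendsto hlim
    (Eventually.of_forall fun k => ⟨s k, hZX (next^[k] _).2, rfl⟩)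
  have hsE : s (E.card + 1) ⊆ E := fun n hn => by
    simpa [Finset.boolIndicator] using hχ _ n hn
  exact Nat.not_succ_le_self _
    (((Finset.card_strictMono.comp hs).id_le (E.card + 1)).trans (Finset.card_le_card hsE))

lemma exists_famIter_succ_eq (X : Set (Finset ℕ)) :
    ∃ ξ : Ordinal.{u}, famIter X (ξ + 1) = famIter X ξ := by
  obtain ⟨a, b, hab, hne⟩ :=
    Function.not_injective_iff.1 (not_injective_of_ordinal (famIter.{u} X))
  wlog hlt : a < b generalizing a b
  · exact this b a hab.symm (Ne.symm hne) (hne.lt_or_gt.resolve_left hlt)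
  refine ⟨a, (famIter_antitone X (Order.le_succ a)).antisymm ?_⟩
  rw [hab]
  exact famIter_antitone X (Order.add_one_le_iff.2 hlt)

lemma famIter_famIota_subset (hX : IsClosed (Finset.boolIndicator '' X)) :
    famIter X (famIota X) ⊆ {∅} := by
  obtain ⟨ξ, hξ⟩ := exists_famIter_succ_eq X
  have hξ' : famIter X ξ ⊆ {∅} := by
    rw [eq_empty_of_subset_famDeriv hX (famIter_subset X ξ) (famIter_succ X ξ ▸ hξ.ge)]
    exact empty_subset _
  exact csInf_mem (s := {ξ | famIter X ξ ⊆ {∅}}) ⟨ξ, hξ'⟩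

end Compactness

/-- For regular families `𝒻, 𝒢`: `ι((𝒻,𝒢)) = ι(𝒢) + ι(𝒻)`. -/
theorem famIota_famSum (F G : Set (Finset ℕ)) (hF : IsRegularFamily F)
    (hG : IsRegularFamily G) :
    famIota (famSum F G) = famIota G + famIota F := by
  obtain ⟨hFc, -, hFh⟩ := hF
  obtain ⟨hGc, hGs, hGh⟩ := hG
  rcases F.eq_empty_or_nonempty with rfl | ⟨E, hE⟩
  · rw [famSum_empty_left, famIota_empty, add_zero]
  have hsum : famIter (famSum F G) (famIota G) = F := by
    rw [famIter_famSum hFh hGh hGs le_rfl,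
      famSum_eq_left (hFh E hE ∅ (Finset.empty_subset E)) (famIter_famIota_subset hGc.isClosed)]
  have hbefore : ∀ ζ < famIota G, ¬ famIter (famSum F G) ζ ⊆ {∅} := fun ζ hζ h =>
    not_famIter_subset_of_lt_famIota hζ
      ((subset_famSum_right F _).trans (famIter_famSum hFh hGh hGs hζ.le ▸ h))
  exact famIota_eq_add hbefore hsum (famIter_famIota_subset hFc.isClosed)
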